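/- Let a < 0 < b be integers, let A = {a, a+1, …, b} \ {0}, and let (Y_t) be the conditioned walk on ℤ \ {0}. Then the total mass of the equilibrium measure of A equals (b − a)/2; explicitly, Q_a[τ̄_A = ∞]·a² + Q_b[τ̄_A = ∞]·b² = (b − a)/2, and these are the only two points of A where the equilibrium measure e_A(x) = 1[x ∈ A]·Q_x[τ̄_A = ∞]·x² is nonzero. Consequently, the capacity of the interval [a,b] with respect to the conditioned walk equals half its diameter. -/

import Mathlib

/-! The conditioned walk is Doob's `h`-transform of simple random walk by `h(x) = |x|`.
From a point of `A` other than `a` and `b` both neighbours lie in `A` or are `0`, which the walk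
never visits, so it re-enters `A` at once. From `b` the walk must step to `b + 1`, with probability
`(b + 1) / (2b)`, and then stay above `b` forever. If `u_n(x)` is the probability of staying above
`b` for `n` steps from `x > b`, then `x u_n(x)` is the mean of simple random walk killed at `b`,
which decreases in `n` to a harmonic function vanishing at `b`. Such a function is linear, and
being squeezed between `x - b` and `x` it equals `x - b`. Hence `Q_b[τ̄_A = ∞] = 1 / (2b)`, i.e.
`e_A(b) = b / 2`, and by the reflection `x ↦ -x`, `e_A(a) = -a / 2`. -/

open MeasureTheory ProbabilityTheory Finset
open scoped ENNReal

/-- One step transition probability of the walk on `ℤ \ {0}` conditioned to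
never hit the origin: `P(x, x+1) = |x+1|/(2|x|)`, `P(x, x-1) = |x-1|/(2|x|)`. -/
noncomputable def condStepZ (u v : ℤ) : ℝ≥0∞ :=
  ENNReal.ofReal
    (if v = u + 1 then |(u : ℝ) + 1| / (2 * |(u : ℝ)|)
      else if v = u - 1 then |(u : ℝ) - 1| / (2 * |(u : ℝ)|) else 0)

/-- `Q` is the law of the conditioned walk `Y` on `ℤ \ {0}` (transition
probabilities `condStepZ`) started at `x`. -/
def IsCondWalkZ {Ω : Type*} [MeasurableSpace Ω] (Q : Measure Ω) (Y : ℕ → Ω → ℤ)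
    (x : ℤ) : Prop :=
  IsProbabilityMeasure Q ∧ (∀ t, Measurable (Y t)) ∧
    ∀ (t : ℕ) (γ : ℕ → ℤ), γ 0 = x →
      Q {ω | ∀ s ≤ t, Y s ω = γ s} = ∏ s ∈ Finset.range t, condStepZ (γ s) (γ (s + 1))

open Filter Topology
open scoped Pointwise

section MarkovChain

variable {α Ω : Type*}

def pathOf (x : α) {t : ℕ} (p : Fin t → α) : ℕ → α
  | 0 => x
  | s + 1 => if h : s < t then p ⟨s, h⟩ else x

theorem pathOf_succ (x : α) {t : ℕ} (p : Fin t → α) {s : ℕ} (hs : s < t) :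
    pathOf x p (s + 1) = p ⟨s, hs⟩ := dif_pos hs

theorem pathOf_cons_succ (x y : α) {t : ℕ} (q : Fin t → α) {s : ℕ} (hs : s ≤ t) :
    pathOf x (Fin.cons y q : Fin (t + 1) → α) (s + 1) = pathOf y q s := by
  rw [pathOf_succ x _ (Nat.lt_succ_of_le hs)]
  cases s with
  | zero => rfl
  | succ s => rw [pathOf_succ y q hs]; rfl

noncomputable def pathMass (K : α → α → ℝ≥0∞) : ℕ → α → ℝ≥0∞
  | 0, _ => 1
  | n + 1, x => ∑' y, K x y * pathMass K n y

theorem tsum_prod_pathOf (K : α → α → ℝ≥0∞) (t : ℕ) (x : α) :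
    ∑' p : Fin t → α, ∏ s ∈ range t, K (pathOf x p s) (pathOf x p (s + 1)) = pathMass K t x := by
  induction t generalizing x with
  | zero => simp [pathMass]
  | succ t ih =>
    rw [← (Fin.consEquiv fun _ => α).tsum_eq, ENNReal.tsum_prod', pathMass]
    refine tsum_congr fun y => ?_
    rw [← ih y, ← ENNReal.tsum_mul_left]
    refine tsum_congr fun q => ?_
    rw [show (Fin.consEquiv fun _ => α) (y, q) = Fin.cons y q from rfl, prod_range_succ',
      mul_comm]
    congr 1
    refine prod_congr rfl fun s hs => ?_
    rw [mem_range] at hs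
    rw [pathOf_cons_succ x y q hs.le, pathOf_cons_succ x y q hs]

noncomputable def killKernel (P : α → α → ℝ≥0∞) (A : Set α) (x y : α) : ℝ≥0∞ :=
  Aᶜ.indicator (P x) y

theorem indicator_prod_pathOf_eq_prod_killKernel (P : α → α → ℝ≥0∞) (A : Set α) (x : α)
    {t : ℕ} (p : Fin t → α) :
    (Set.univ.pi fun _ => Aᶜ).indicator
        (fun p => ∏ s ∈ range t, P (pathOf x p s) (pathOf x p (s + 1))) p
      = ∏ s ∈ range t, killKernel P A (pathOf x p s) (pathOf x p (s + 1)) := by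
  by_cases hp : p ∈ Set.univ.pi fun _ => Aᶜ
  · rw [Set.indicator_of_mem hp]
    refine prod_congr rfl fun s hs => ?_
    rw [killKernel, pathOf_succ x p (mem_range.mp hs),
      Set.indicator_of_mem (hp _ (Set.mem_univ _))]
  · obtain ⟨i, -, hi⟩ : ∃ i ∈ Set.univ, p i ∉ Aᶜ := by simpa [Set.mem_pi] using hp
    rw [Set.indicator_of_notMem hp, eq_comm]
    refine prod_eq_zero (mem_range.mpr i.2) ?_
    rw [killKernel, pathOf_succ x p i.2, Set.indicator_of_notMem hi]

theorem setOf_avoid_eq_preimage (Y : ℕ → Ω → α) (A : Set α) (t : ℕ) :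
    {ω | ∀ s, 1 ≤ s → s ≤ t → Y s ω ∉ A}
      = (fun ω (i : Fin t) => Y (i + 1) ω) ⁻¹' Set.univ.pi fun _ => Aᶜ := by
  ext ω
  simp only [Set.mem_ofPred_eq, Set.mem_preimage, Set.mem_univ_pi, Set.mem_compl_iff]
  refine ⟨fun h i => h _ (by omega) i.2, fun h s hs hst => ?_⟩
  obtain ⟨s, rfl⟩ := Nat.exists_eq_add_of_le' hs
  exact h ⟨s, hst⟩

theorem setOf_forall_eq_pathOf (Y : ℕ → Ω → α) (x : α) {t : ℕ} (p : Fin t → α) :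
    {ω | ∀ s ≤ t, Y s ω = pathOf x p s}
      = (fun ω (i : Fin t) => Y (i + 1) ω) ⁻¹' {p} ∩ Y 0 ⁻¹' {x} := by
  ext ω
  simp only [Set.mem_ofPred_eq, Set.mem_inter_iff, Set.mem_preimage, Set.mem_singleton_iff,
    funext_iff]
  refine ⟨fun h => ⟨fun i => ?_, h 0 (Nat.zero_le _)⟩, fun ⟨h, h0⟩ s hs => ?_⟩
  · rw [h _ i.2, pathOf_succ x p i.2]
  · cases s with
    | zero => exact h0
    | succ s => rw [pathOf_succ x p hs]; exact h ⟨s, hs⟩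

variable [MeasurableSpace Ω] [MeasurableSpace α] [MeasurableSingletonClass α] [Countable α]

def IsMarkovChain (Q : Measure Ω) (Y : ℕ → Ω → α) (P : α → α → ℝ≥0∞) (x : α) : Prop :=
  IsProbabilityMeasure Q ∧ (∀ t, Measurable (Y t)) ∧
    ∀ (t : ℕ) (γ : ℕ → α), γ 0 = x →
      Q {ω | ∀ s ≤ t, Y s ω = γ s} = ∏ s ∈ Finset.range t, P (γ s) (γ (s + 1))

namespace IsMarkovChain

variable {Q : Measure Ω} {Y : ℕ → Ω → α} {P : α → α → ℝ≥0∞} {x : α}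

theorem measure_avoid (h : IsMarkovChain Q Y P x) (A : Set α) (t : ℕ) :
    Q {ω | ∀ s, 1 ≤ s → s ≤ t → Y s ω ∉ A} = pathMass (killKernel P A) t x := by
  have := h.1
  have hstart : Q (Y 0 ⁻¹' {x})ᶜ = 0 := by
    have h0 := h.2.2 0 (fun _ => x) rfl
    simp only [nonpos_iff_eq_zero, forall_eq, prod_range_zero] at h0
    rwa [prob_compl_eq_zero_iff (h.2.1 0 (MeasurableSet.singleton x))]
  -- split the event according to the countably many values of `(Y 1, …, Y t)`
  set F : Ω → Fin t → α := fun ω i => Y (i + 1) ω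
  have hF : Measurable F := measurable_pi_lambda _ fun i => h.2.1 _
  rw [← measure_inter_conull hstart, setOf_avoid_eq_preimage,
    ← Measure.restrict_apply' (h.2.1 0 (MeasurableSet.singleton x)),
    ← tsum_measure_preimage_singleton (Set.to_countable _)
      fun p _ => hF (MeasurableSet.singleton p),
    ← tsum_prod_pathOf, _root_.tsum_subtype _ fun p => Q.restrict (Y 0 ⁻¹' {x}) (F ⁻¹' {p})]
  refine tsum_congr fun p => ?_
  rw [← indicator_prod_pathOf_eq_prod_killKernel]
  congr 1
  funext p
  rw [Measure.restrict_apply' (h.2.1 0 (MeasurableSet.singleton x)), ← setOf_forall_eq_pathOf,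
    h.2.2 t _ rfl]

theorem tendsto_pathMass_killKernel (h : IsMarkovChain Q Y P x) (A : Set α) :
    Tendsto (fun t => pathMass (killKernel P A) t x) atTop
      (𝓝 (Q {ω | ∀ t, 1 ≤ t → Y t ω ∉ A})) := by
  have := h.1
  have hE : {ω | ∀ t, 1 ≤ t → Y t ω ∉ A} = ⋂ t, {ω | ∀ s, 1 ≤ s → s ≤ t → Y s ω ∉ A} := by
    ext ω
    simp only [Set.mem_iInter, Set.mem_ofPred_eq]
    exact ⟨fun h _ s hs _ => h s hs, fun h t ht => h t t ht le_rfl⟩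
  simp_rw [hE, ← h.measure_avoid A]
  refine tendsto_measure_iInter_atTop (fun t => ?_)
    (fun t t' htt' ω hω s hs hst => hω s hs (hst.trans htt')) ⟨0, measure_ne_top _ _⟩
  rw [setOf_avoid_eq_preimage]
  exact ((measurable_pi_lambda _ fun i => h.2.1 _) MeasurableSet.of_discrete).nullMeasurableSet

end IsMarkovChain

end MarkovChain

section KilledWalk

variable (b : ℤ)

noncomputable def killedAvg (f : ℤ → ℝ) (x : ℤ) : ℝ :=
  if x ≤ b then 0 else (f (x + 1) + f (x - 1)) / 2

/-- `killedMean b n x = E_x[S_n; S_1, …, S_n > b]` for simple random walk `S` and `x > b`. -/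
noncomputable def killedMean (n : ℕ) : ℤ → ℝ :=
  (killedAvg b)^[n] fun x => if x ≤ b then 0 else x

variable {b}

theorem killedAvg_mono : Monotone (killedAvg b) := by
  intro f g hfg x
  unfold killedAvg
  split_ifs
  · exact le_rfl
  · linarith [hfg (x + 1), hfg (x - 1)]

theorem killedAvg_max_sub :
    killedAvg b (fun x : ℤ => max ((x : ℝ) - b) 0) = fun x : ℤ => max ((x : ℝ) - b) 0 := by
  funext x
  unfold killedAvg
  split_ifs with hx
  · have : (x : ℝ) ≤ b := by exact_mod_cast hx
    exact (max_eq_right (by linarith)).symm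
  · have : (b : ℝ) + 1 ≤ x := by exact_mod_cast (by omega : b + 1 ≤ x)
    push_cast
    rw [max_eq_left (by linarith), max_eq_left (by linarith), max_eq_left (by linarith)]
    ring

theorem killedMean_succ (n : ℕ) : killedMean b (n + 1) = killedAvg b (killedMean b n) :=
  Function.iterate_succ_apply' _ _ _

theorem killedMean_of_le {x : ℤ} (hx : x ≤ b) (n : ℕ) : killedMean b n x = 0 := by
  cases n with
  | zero => exact if_pos hx
  | succ n => rw [killedMean_succ, killedAvg, if_pos hx]

theorem killedMean_succ_of_lt {x : ℤ} (hx : b < x) (n : ℕ) :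
    killedMean b (n + 1) x = (killedMean b n (x + 1) + killedMean b n (x - 1)) / 2 := by
  rw [killedMean_succ, killedAvg, if_neg (not_le.mpr hx)]

theorem max_sub_le_killedMean (hb : 0 ≤ b) (n : ℕ) :
    (fun x : ℤ => max ((x : ℝ) - b) 0) ≤ killedMean b n := by
  rw [← Function.iterate_fixed killedAvg_max_sub n]
  refine killedAvg_mono.iterate n fun y => ?_
  have : (0 : ℝ) ≤ b := by exact_mod_cast hb
  split_ifs with hy
  · exact (max_eq_right (by linarith [(by exact_mod_cast hy : (y : ℝ) ≤ b)])).le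
  · have : (b : ℝ) < y := by exact_mod_cast not_le.mp hy
    exact max_le (by linarith) (by linarith)

theorem killedMean_nonneg (hb : 0 ≤ b) (n : ℕ) (x : ℤ) : 0 ≤ killedMean b n x :=
  (le_max_right _ _).trans (max_sub_le_killedMean hb n x)

theorem killedMean_antitone (hb : 0 ≤ b) : Antitone (killedMean b) := by
  refine killedAvg_mono.antitone_iterate_of_map_le fun x => ?_
  by_cases hx : x ≤ b
  · simp only [killedAvg, if_pos hx, le_refl]
  · have hx1 : (1 : ℝ) ≤ x := by exact_mod_cast (by omega : 1 ≤ x)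
    simp only [killedAvg, if_neg hx, if_neg (by omega : ¬x + 1 ≤ b)]
    split_ifs <;> push_cast <;> linarith

theorem tendsto_killedAvg {ι : Type*} {l : Filter ι} {f : ι → ℤ → ℝ} {g : ℤ → ℝ}
    (hf : ∀ x, Tendsto (fun i => f i x) l (𝓝 (g x))) (x : ℤ) :
    Tendsto (fun i => killedAvg b (f i) x) l (𝓝 (killedAvg b g x)) := by
  unfold killedAvg
  split_ifs
  · exact tendsto_const_nhds
  · exact ((hf (x + 1)).add (hf (x - 1))).div_const 2

theorem killedAvg_fixed_apply {f : ℤ → ℝ} (hf : killedAvg b f = f) (k : ℕ) :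
    f (b + k) = k * f (b + 1) := by
  have h0 : f b = 0 := by
    simpa only [killedAvg, if_pos le_rfl, eq_comm] using congrFun hf b
  have hmid : ∀ x, b < x → f x = (f (x + 1) + f (x - 1)) / 2 := fun x hx => by
    simpa only [killedAvg, if_neg (not_le.mpr hx), eq_comm] using congrFun hf x
  suffices ∀ k : ℕ, f (b + k) = k * f (b + 1) ∧ f (b + (k + 1)) = (k + 1) * f (b + 1) from
    (this k).1
  intro k
  induction k with
  | zero => simp [h0]
  | succ k ih =>
    push_cast
    refine ⟨ih.2, ?_⟩
    have := hmid (b + (k + 1)) (by omega)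
    rw [show b + ((k : ℤ) + 1) - 1 = b + k by ring, ih.1, ih.2,
      show b + ((k : ℤ) + 1) + 1 = b + (k + 1 + 1) by ring] at this
    linarith

theorem tendsto_killedMean_boundary (hb : 0 ≤ b) :
    Tendsto (fun n => killedMean b n (b + 1)) atTop (𝓝 1) := by
  have hbdd : ∀ x, BddBelow (Set.range fun n => killedMean b n x) := fun x =>
    ⟨0, Set.forall_mem_range.mpr fun n => killedMean_nonneg hb n x⟩
  set w : ℤ → ℝ := fun x => ⨅ n, killedMean b n x
  have hw : ∀ x, Tendsto (fun n => killedMean b n x) atTop (𝓝 (w x)) := fun x =>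
    tendsto_atTop_ciInf (fun n m hnm => killedMean_antitone hb hnm x) (hbdd x)
  have hfix : killedAvg b w = w := funext fun x =>
    tendsto_nhds_unique (tendsto_killedAvg hw x) <|
      ((hw x).comp (tendsto_add_atTop_nat 1)).congr fun n => congrFun (killedMean_succ n) x
  have hlower : 1 ≤ w (b + 1) := le_ciInf fun n => by
    simpa using (le_max_left _ _).trans (max_sub_le_killedMean hb n (b + 1))
  have hupper (k : ℕ) : (k + 1) * w (b + 1) ≤ b + (k + 1) := by
    have hle : w (b + (k + 1 : ℕ)) ≤ killedMean b 0 (b + (k + 1 : ℕ)) := ciInf_le (hbdd _) 0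
    rw [killedAvg_fixed_apply hfix, killedMean, Function.iterate_zero_apply,
      if_neg (by omega)] at hle
    exact_mod_cast hle
  suffices w (b + 1) = 1 from this ▸ hw (b + 1)
  refine le_antisymm (le_of_not_gt fun hgt => ?_) hlower
  obtain ⟨k, hk⟩ := exists_nat_gt ((b : ℝ) / (w (b + 1) - 1))
  have := hupper k
  rw [div_lt_iff₀ (by linarith)] at hk
  nlinarith

end KilledWalk

section CondWalk

theorem condStepZ_eq_zero_of_ne {x y : ℤ} (h1 : y ≠ x + 1) (h2 : y ≠ x - 1) :
    condStepZ x y = 0 := by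
  simp [condStepZ, h1, h2]

theorem condStepZ_zero_right (x : ℤ) : condStepZ x 0 = 0 := by
  unfold condStepZ
  split_ifs with h1 h2
  · rw [show (x : ℝ) + 1 = 0 by exact_mod_cast h1.symm]; simp
  · rw [show (x : ℝ) - 1 = 0 by exact_mod_cast h2.symm]; simp
  · simp

theorem condStepZ_of_pos {x y : ℤ} (hx : 0 < x) (hy : y = x + 1 ∨ y = x - 1) :
    condStepZ x y = ENNReal.ofReal (y / (2 * x)) := by
  have hx1 : (1 : ℝ) ≤ x := by exact_mod_cast hx
  unfold condStepZ
  rcases hy with rfl | rfl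
  · rw [if_pos rfl, abs_of_pos (by linarith), abs_of_pos (by linarith)]
    push_cast; rfl
  · rw [if_neg (by omega), if_pos rfl, abs_of_nonneg (by linarith), abs_of_pos (by linarith)]
    push_cast; rfl

theorem condStepZ_neg (x y : ℤ) : condStepZ (-x) (-y) = condStepZ x y := by
  unfold condStepZ
  congr 1
  by_cases h1 : y = x + 1
  · rw [if_neg (by omega), if_pos (by omega), if_pos h1]
    push_cast
    rw [show -(x : ℝ) - 1 = -((x : ℝ) + 1) by ring, abs_neg, abs_neg]
  by_cases h2 : y = x - 1
  · rw [if_pos (by omega), if_neg h1, if_pos h2]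
    push_cast
    rw [show -(x : ℝ) + 1 = -((x : ℝ) - 1) by ring, abs_neg, abs_neg]
  rw [if_neg (by omega), if_neg (by omega), if_neg h1, if_neg h2]

theorem pathMass_succ_of_nearest {K : ℤ → ℤ → ℝ≥0∞} {x : ℤ}
    (hK : ∀ y, y ≠ x + 1 → y ≠ x - 1 → K x y = 0) (n : ℕ) :
    pathMass K (n + 1) x
      = K x (x + 1) * pathMass K n (x + 1) + K x (x - 1) * pathMass K n (x - 1) := by
  rw [pathMass, tsum_eq_sum (s := {x + 1, x - 1}), sum_pair (by omega)]
  intro y hy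
  simp only [mem_insert, mem_singleton, not_or] at hy
  rw [hK y hy.1 hy.2, zero_mul]

theorem killKernel_condStepZ_eq_zero {A : Set ℤ} {x y : ℤ}
    (hy : y ∈ A ∨ y = 0 ∨ (y ≠ x + 1 ∧ y ≠ x - 1)) : killKernel condStepZ A x y = 0 := by
  rw [killKernel, Set.indicator_apply_eq_zero]
  intro hyA
  rcases hy with hyA' | rfl | ⟨h1, h2⟩
  · exact absurd hyA' hyA
  · exact condStepZ_zero_right x
  · exact condStepZ_eq_zero_of_ne h1 h2

end CondWalk

section Escape

variable {Ω : Type*} [MeasurableSpace Ω] {Q : Measure Ω} {Y : ℕ → Ω → ℤ} {A : Set ℤ}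

theorem IsCondWalkZ.isMarkovChain {x : ℤ} (h : IsCondWalkZ Q Y x) :
    IsMarkovChain Q Y condStepZ x := h

theorem IsCondWalkZ.neg {x : ℤ} (h : IsCondWalkZ Q Y x) :
    IsCondWalkZ Q (fun t ω => -Y t ω) (-x) := by
  refine ⟨h.1, fun t => (h.2.1 t).neg, fun t γ hγ => ?_⟩
  have hset : {ω | ∀ s ≤ t, -Y s ω = γ s} = {ω | ∀ s ≤ t, Y s ω = -γ s} := by
    ext ω
    simp only [Set.mem_ofPred_eq, neg_eq_iff_eq_neg]
  rw [hset, h.2.2 t (fun s => -γ s) (by simp [hγ])]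
  exact prod_congr rfl fun s _ => condStepZ_neg _ _

theorem pathMass_killKernel_eq_killedMean {b : ℤ} (hb : 0 < b) (hbA : b ∈ A)
    (hA : ∀ y, b < y → y ∉ A) (n : ℕ) {x : ℤ} (hx : b < x) :
    pathMass (killKernel condStepZ A) n x = ENNReal.ofReal (killedMean b n x / x) := by
  have hx0 : (0 : ℝ) < x := by exact_mod_cast (by omega : 0 < x)
  induction n generalizing x with
  | zero =>
    rw [pathMass, killedMean, Function.iterate_zero_apply, if_neg (not_le.mpr hx),
      div_self hx0.ne', ENNReal.ofReal_one]
  | succ n ih =>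
    have hstep : ∀ y, (y = x + 1 ∨ y = x - 1) → b ≤ y →
        killKernel condStepZ A x y * pathMass (killKernel condStepZ A) n y
          = ENNReal.ofReal (killedMean b n y / (2 * x)) := by
      intro y hy hby
      rcases hby.eq_or_lt with rfl | hby
      · rw [killKernel_condStepZ_eq_zero (Or.inl hbA), zero_mul, killedMean_of_le le_rfl,
          zero_div, ENNReal.ofReal_zero]
      · have hy0 : (0 : ℝ) < y := by exact_mod_cast (by omega : 0 < y)
        rw [killKernel, Set.indicator_of_mem (hA y hby), condStepZ_of_pos (by omega) hy,
          ih hby hy0, ← ENNReal.ofReal_mul (by positivity)]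
        congr 1
        field_simp
    rw [pathMass_succ_of_nearest
        fun y h1 h2 => killKernel_condStepZ_eq_zero (Or.inr (Or.inr ⟨h1, h2⟩)),
      hstep _ (Or.inl rfl) (by omega), hstep _ (Or.inr rfl) (by omega),
      ← ENNReal.ofReal_add (by have := killedMean_nonneg hb.le n (x + 1); positivity)
        (by have := killedMean_nonneg hb.le n (x - 1); positivity),
      killedMean_succ_of_lt hx]
    congr 1
    ring

theorem IsCondWalkZ.measure_avoid_of_right_endpoint {b : ℤ} (h : IsCondWalkZ Q Y b)
    (hb : 0 < b) (hbA : b ∈ A) (hA : ∀ y, b < y → y ∉ A) (hb1 : b - 1 ∈ A ∨ b - 1 = 0) :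
    Q {ω | ∀ t, 1 ≤ t → Y t ω ∉ A} = ENNReal.ofReal (1 / (2 * b)) := by
  have hmass (n : ℕ) : pathMass (killKernel condStepZ A) (n + 1) b
      = ENNReal.ofReal (killedMean b n (b + 1) / (2 * b)) := by
    rw [pathMass_succ_of_nearest
        fun y h1 h2 => killKernel_condStepZ_eq_zero (Or.inr (Or.inr ⟨h1, h2⟩)),
      killKernel_condStepZ_eq_zero (hb1.imp_right Or.inl), zero_mul, add_zero, killKernel,
      Set.indicator_of_mem (hA _ (lt_add_one b)), condStepZ_of_pos hb (Or.inl rfl),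
      pathMass_killKernel_eq_killedMean hb hbA hA n (lt_add_one b),
      ← ENNReal.ofReal_mul (by positivity)]
    congr 1
    push_cast
    field_simp
  refine tendsto_nhds_unique
    ((tendsto_add_atTop_iff_nat 1).mpr (h.isMarkovChain.tendsto_pathMass_killKernel A)) ?_
  simp_rw [hmass]
  exact ENNReal.tendsto_ofReal ((tendsto_killedMean_boundary hb.le).div_const _)

theorem IsCondWalkZ.measure_avoid_of_left_endpoint {a : ℤ} (h : IsCondWalkZ Q Y a)
    (ha : a < 0) (haA : a ∈ A) (hA : ∀ y, y < a → y ∉ A) (ha1 : a + 1 ∈ A ∨ a + 1 = 0) :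
    Q {ω | ∀ t, 1 ≤ t → Y t ω ∉ A} = ENNReal.ofReal (1 / (2 * -a)) := by
  have := h.neg.measure_avoid_of_right_endpoint (A := -A) (by omega) (by simpa using haA)
    (fun y hy => by simpa using hA (-y) (by omega))
    (ha1.imp (fun h1 => by rwa [Set.mem_neg, neg_sub', neg_neg]) (by omega))
  simpa [Set.mem_neg] using this

theorem IsCondWalkZ.measure_avoid_eq_zero {x : ℤ} (h : IsCondWalkZ Q Y x)
    (hup : x + 1 ∈ A ∨ x + 1 = 0) (hdown : x - 1 ∈ A ∨ x - 1 = 0) :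
    Q {ω | ∀ t, 1 ≤ t → Y t ω ∉ A} = 0 := by
  refine le_antisymm ?_ zero_le
  calc Q {ω | ∀ t, 1 ≤ t → Y t ω ∉ A}
      ≤ Q {ω | ∀ s, 1 ≤ s → s ≤ 1 → Y s ω ∉ A} := measure_mono fun ω hω s hs _ => hω s hs
    _ = pathMass (killKernel condStepZ A) 1 x := h.isMarkovChain.measure_avoid A 1
    _ = 0 := by
      rw [pathMass_succ_of_nearest
          fun y h1 h2 => killKernel_condStepZ_eq_zero (Or.inr (Or.inr ⟨h1, h2⟩)),
        killKernel_condStepZ_eq_zero (hup.imp_right Or.inl),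
        killKernel_condStepZ_eq_zero (hdown.imp_right Or.inl), zero_mul, zero_mul, add_zero]

end Escape

theorem ENNReal.ofReal_one_div_two_mul_mul_sq {c : ℝ} (hc : 0 < c) :
    ENNReal.ofReal (1 / (2 * c)) * ENNReal.ofReal (c ^ 2) = ENNReal.ofReal (c / 2) := by
  rw [← ENNReal.ofReal_mul (by positivity)]
  congr 1
  field_simp

/-- for integers `a < 0 < b` and `A = {a, …, b} \ {0}`, the
equilibrium measure `e_A(x) = 1_{x ∈ A} Q_x[τ̄_A = ∞] x²` of the conditioned
walk on `ℤ \ {0}` (reversible measure `μ_x = x²`) vanishes except at the two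
endpoints `a` and `b`, its total mass (the capacity of `A`) is
`Q_a[τ̄_A = ∞] a² + Q_b[τ̄_A = ∞] b² = (b - a)/2`: the capacity of the interval
equals half of its diameter. -/
theorem equilibrium_measure_and_capacity_of_interval
    {Ω : Type*} [MeasurableSpace Ω] (Q : ℤ → Measure Ω) (Y : ℤ → ℕ → Ω → ℤ)
    (hQ : ∀ x : ℤ, x ≠ 0 → IsCondWalkZ (Q x) (Y x) x)
    (a b : ℤ) (ha : a < 0) (hb : 0 < b) :
    letI A : Set ℤ := {z : ℤ | a ≤ z ∧ z ≤ b ∧ z ≠ 0}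
    ((Q a) {ω | ∀ t : ℕ, 1 ≤ t → Y a t ω ∉ A} * ENNReal.ofReal ((a : ℝ) ^ 2)
        + (Q b) {ω | ∀ t : ℕ, 1 ≤ t → Y b t ω ∉ A} * ENNReal.ofReal ((b : ℝ) ^ 2)
      = ENNReal.ofReal (((b : ℝ) - (a : ℝ)) / 2))
    ∧ (∀ x ∈ A, x ≠ a → x ≠ b → (Q x) {ω | ∀ t : ℕ, 1 ≤ t → Y x t ω ∉ A} = 0)
    ∧ ∑ x ∈ (Finset.Icc a b).erase 0,
        (Q x) {ω | ∀ t : ℕ, 1 ≤ t → Y x t ω ∉ A} * ENNReal.ofReal ((x : ℝ) ^ 2)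
      = ENNReal.ofReal (((b : ℝ) - (a : ℝ)) / 2) := by
  set A : Set ℤ := {z : ℤ | a ≤ z ∧ z ≤ b ∧ z ≠ 0}
  have hA {x : ℤ} (hax : a ≤ x) (hxb : x ≤ b) : x ∈ A ∨ x = 0 :=
    or_iff_not_imp_right.mpr fun hx => ⟨hax, hxb, hx⟩
  have hQa := (hQ a ha.ne).measure_avoid_of_left_endpoint ha (A := A) ⟨le_rfl, by omega, ha.ne⟩
    (fun y hy hyA => by have := hyA.1; omega) (hA (by omega) (by omega))
  have hQb := (hQ b hb.ne').measure_avoid_of_right_endpoint hb (A := A)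
    ⟨by omega, le_rfl, hb.ne'⟩
    (fun y hy hyA => by have := hyA.2.1; omega) (hA (by omega) (by omega))
  have hinterior : ∀ x ∈ A, x ≠ a → x ≠ b → (Q x) {ω | ∀ t : ℕ, 1 ≤ t → Y x t ω ∉ A} = 0 :=
    fun x ⟨hax, hxb, hx0⟩ hxa hxb' =>
      (hQ x hx0).measure_avoid_eq_zero (hA (by omega) (by omega)) (hA (by omega) (by omega))
  have hcap : ENNReal.ofReal (1 / (2 * -a)) * ENNReal.ofReal ((a : ℝ) ^ 2)
      + ENNReal.ofReal (1 / (2 * b)) * ENNReal.ofReal ((b : ℝ) ^ 2)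
      = ENNReal.ofReal (((b : ℝ) - (a : ℝ)) / 2) := by
    have ha0 : (0 : ℝ) < -a := by exact_mod_cast neg_pos.mpr ha
    have hb0 : (0 : ℝ) < b := by exact_mod_cast hb
    rw [← neg_sq, ENNReal.ofReal_one_div_two_mul_mul_sq ha0,
      ENNReal.ofReal_one_div_two_mul_mul_sq hb0,
      ← ENNReal.ofReal_add (by positivity) (by positivity)]
    ring_nf
  refine ⟨by rwa [hQa, hQb], hinterior, ?_⟩
  rw [sum_eq_add_of_mem a b (by simp only [mem_erase, mem_Icc]; omega)
    (by simp only [mem_erase, mem_Icc]; omega) (by omega) fun x hx hxab => ?_, hQa, hQb, hcap]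
  rw [mem_erase, mem_Icc] at hx
  rw [hinterior x ⟨hx.2.1, hx.2.2, hx.1⟩ hxab.1 hxab.2, zero_mul]
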